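/- Let α ∈ (0,1), λ > 0, β > 0, K₀ > 0 and let K₂ be a real constant. Define f₂ : (0,1] → ℝ by f₂(r) = λβK₀^(−λ/β)((1−α)r+α)^(λ/β)/((2λ+β)(1−α)) + λr/(2β+λ) − αβλ(1+2β+λ)/((β+λ)(2β+λ)(1−α)) + K₂((1−α)r+α)^(−(1+λ/β)). Then f₂ is differentiable on (0,1] and for every r ∈ (0,1] it satisfies the first-order differential equation β·f₂′(r) = λβK₀^(−λ/β)((1−α)r+α)^(λ/β−1) − λβα/((1−α)r+α) − (1−α)(β+λ)f₂(r)/((1−α)r+α) + (1−α)λr/((1−α)r+α). -/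

import Mathlib

/-!
Write `u = (1 - α) r + α > 0`. The equation is linear in `f₂`: `u ^ (-(1 + λ/β))` solves its
homogeneous part, since `β (u ^ (-(1 + λ/β)))' = -(1 - α)(β + λ) u ^ (-(1 + λ/β)) / u`, and the
remaining terms of `f₂` form a particular solution: the power `u ^ (λ/β)` balances the forcing
term `u ^ (λ/β - 1)`, and the affine part of `f₂` balances the remaining rational terms.
-/

open Real

theorem hasDerivAt_affine_rpow {a b x : ℝ} (e : ℝ) (hx : a * x + b ≠ 0) :
    HasDerivAt (fun y => (a * y + b) ^ e) (e * (a * x + b) ^ (e - 1) * a) x := by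
  convert (((hasDerivAt_id' x).const_mul a).add_const b).rpow_const (Or.inl hx) using 1
  ring

theorem lemma2_country2_ODE_general
    (α lam β K₀ K₂ : ℝ) (hα : α ∈ Set.Ioo (0:ℝ) 1) (hlam : 0 < lam) (hβ : 0 < β)
    (f₂ : ℝ → ℝ)
    (hf₂ : ∀ r : ℝ, f₂ r =
      lam * β * K₀ ^ (-(lam / β)) * ((1 - α) * r + α) ^ (lam / β) / ((2 * lam + β) * (1 - α))
      + lam * r / (2 * β + lam)
      - α * β * lam * (1 + 2 * β + lam) / ((β + lam) * (2 * β + lam) * (1 - α))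
      + K₂ * ((1 - α) * r + α) ^ (-(1 + lam / β))) :
    ∀ r ∈ Set.Ioc (0:ℝ) 1, ∃ d : ℝ, HasDerivAt f₂ d r ∧
      β * d = lam * β * K₀ ^ (-(lam / β)) * ((1 - α) * r + α) ^ (lam / β - 1)
        - lam * β * α / ((1 - α) * r + α)
        - (1 - α) * (β + lam) * f₂ r / ((1 - α) * r + α)
        + (1 - α) * lam * r / ((1 - α) * r + α) := by
  obtain ⟨hα0, hα1⟩ := hα
  rintro r ⟨hr0, -⟩
  have hu : 0 < (1 - α) * r + α := by nlinarith
  have hderiv := ((((hasDerivAt_affine_rpow (lam / β) hu.ne').const_mul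
      (lam * β * K₀ ^ (-(lam / β)))).div_const ((2 * lam + β) * (1 - α))).add
      (((hasDerivAt_id r).const_mul lam).div_const (2 * β + lam))).sub_const
      (α * β * lam * (1 + 2 * β + lam) / ((β + lam) * (2 * β + lam) * (1 - α)))
      |>.add ((hasDerivAt_affine_rpow (-(1 + lam / β)) hu.ne').const_mul K₂)
  refine ⟨_, hderiv.congr_of_eventuallyEq (Filter.Eventually.of_forall hf₂), ?_⟩
  rw [hf₂ r, rpow_sub_one hu.ne', rpow_sub_one hu.ne']
  -- Hiding the two powers as atoms keeps `field_simp` out of their exponents.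
  generalize ((1 - α) * r + α) ^ (lam / β) = v
  generalize ((1 - α) * r + α) ^ (-(1 + lam / β)) = w
  have h1α : 1 - α ≠ 0 := by linarith
  have hu0 := hu.ne'
  field_simp
  ring

/-- Country 2's part of Lemma 2: the general best-response form `f₂` satisfies
the first-order ODE `β f₂' = λβK₀^(−λ/β)((1−α)r+α)^(λ/β−1) − λβα/((1−α)r+α)
  − (1−α)(β+λ)f₂/((1−α)r+α) + (1−α)λr/((1−α)r+α)` on `(0,1]`. -/
theorem lemma2_country2_ODE
    (α lam β K₀ K₂ : ℝ) (hα : α ∈ Set.Ioo (0:ℝ) 1) (hlam : 0 < lam) (hβ : 0 < β)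
    (hK₀ : 0 < K₀)
    (f₂ : ℝ → ℝ)
    (hf₂ : ∀ r : ℝ, f₂ r =
      lam * β * K₀ ^ (-(lam / β)) * ((1 - α) * r + α) ^ (lam / β) / ((2 * lam + β) * (1 - α))
      + lam * r / (2 * β + lam)
      - α * β * lam * (1 + 2 * β + lam) / ((β + lam) * (2 * β + lam) * (1 - α))
      + K₂ * ((1 - α) * r + α) ^ (-(1 + lam / β))) :
    ∀ r ∈ Set.Ioc (0:ℝ) 1, ∃ d : ℝ, HasDerivAt f₂ d r ∧
      β * d = lam * β * K₀ ^ (-(lam / β)) * ((1 - α) * r + α) ^ (lam / β - 1)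
        - lam * β * α / ((1 - α) * r + α)
        - (1 - α) * (β + lam) * f₂ r / ((1 - α) * r + α)
        + (1 - α) * lam * r / ((1 - α) * r + α) :=
  lemma2_country2_ODE_general α lam β K₀ K₂ hα hlam hβ f₂ hf₂
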